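/- arXiv:2111.02551 — 4 statements merged into one kernel-verified Lean document; each statement's English description precedes it below -/
import Mathlib

section
/- Let P be a finite connected poset and M : P → vec a persistence module. Suppose M ≅ ⊕_{i∈F} M_i, where F is a finite index set and each M_i is a nonzero indecomposable persistence module. Then the generalized rank of M equals the number of indices i ∈ F such that M_i is isomorphic to V_P, the interval module supported on all of P. -/
open scoped Classical
open Module

noncomputable section

/-- A pointwise finite-dimensional persistence module over a poset `P`. -/
structure PersMod (𝔽 : Type) [Field 𝔽] (P : Type) [PartialOrder P] where
  V : P → Type
  [iAdd : ∀ p, AddCommGroup (V p)]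
  [iMod : ∀ p, Module 𝔽 (V p)]
  [iFin : ∀ p, FiniteDimensional 𝔽 (V p)]
  φ : ∀ {p q : P}, p ≤ q → (V p →ₗ[𝔽] V q)
  φ_refl : ∀ p : P, φ (le_refl p) = LinearMap.id
  φ_comp : ∀ {p q r : P} (hpq : p ≤ q) (hqr : q ≤ r),
    (φ hqr).comp (φ hpq) = φ (le_trans hpq hqr)

attribute [instance] PersMod.iAdd PersMod.iMod PersMod.iFin

/-- A poset is connected if any two elements are joined by a finite zigzag of
comparable elements. -/
def ZigzagConnected (P : Type) [PartialOrder P] : Prop :=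
  ∀ p q : P, Relation.ReflTransGen (fun a b : P => a ≤ b ∨ b ≤ a) p q

section SetNotions

variable {P : Type} [PartialOrder P]

/-- Convexity of a subset of a poset. -/
def SetConvex (I : Set P) : Prop :=
  ∀ ⦃p q r : P⦄, p ∈ I → r ∈ I → p ≤ q → q ≤ r → q ∈ I

/-- Connectedness of a subset: any two points are joined by a zigzag of
comparable elements staying inside the subset. -/
def SetZigzagConn (I : Set P) : Prop :=
  ∀ p ∈ I, ∀ q ∈ I,
    Relation.ReflTransGen (fun a b : P => a ∈ I ∧ b ∈ I ∧ (a ≤ b ∨ b ≤ a)) p q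

/-- An interval of a poset: nonempty, convex and connected. -/
def IsIntervalSet (I : Set P) : Prop :=
  I.Nonempty ∧ SetConvex I ∧ SetZigzagConn I

/-- A path-connected subposet (member of `Con(P)`): nonempty and any two of its
points are joined by a sequence in `I` in which consecutive elements are related
by the covering relation of `P`. -/
def IsPathConnIn (I : Set P) : Prop :=
  I.Nonempty ∧ ∀ p ∈ I, ∀ q ∈ I,
    Relation.ReflTransGen (fun a b : P => a ∈ I ∧ b ∈ I ∧ (a ⋖ b ∨ b ⋖ a)) p q

lemma setConvex_univ : SetConvex (Set.univ : Set P) := by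
  intro p q r _ _ _ _; trivial

end SetNotions

namespace PersMod

variable {𝔽 : Type} [Field 𝔽] {P : Type} [PartialOrder P]

/-- The limit of a persistence module: the module of compatible sections. -/
def sections (M : PersMod 𝔽 P) : Submodule 𝔽 (∀ p, M.V p) where
  carrier := {x | ∀ (p q : P) (h : p ≤ q), M.φ h (x p) = x q}
  add_mem' := by
    intro x y hx hy p q h
    simp only [Pi.add_apply, map_add]
    rw [hx p q h, hy p q h]
  zero_mem' := by intro p q h; simp
  smul_mem' := by
    intro c x hx p q h
    simp only [Pi.smul_apply, map_smul]
    rw [hx p q h]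

/-- The relations defining the colimit of a persistence module. -/
def colimRel (M : PersMod 𝔽 P) : Submodule 𝔽 (DirectSum P fun p => M.V p) :=
  Submodule.span 𝔽 {z | ∃ (p q : P) (h : p ≤ q) (v : M.V p),
    z = DirectSum.lof 𝔽 P (fun p => M.V p) q (M.φ h v)
      - DirectSum.lof 𝔽 P (fun p => M.V p) p v}

/-- The colimit of a persistence module. -/
abbrev colim (M : PersMod 𝔽 P) :=
  (DirectSum P fun p => M.V p) ⧸ M.colimRel

/-- The canonical map `lim M → colim M` factored through the value at `p`,
i.e. `ι_p ∘ π_p`. -/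
def canonicalMapAt (M : PersMod 𝔽 P) (p : P) : M.sections →ₗ[𝔽] M.colim :=
  (M.colimRel.mkQ.comp (DirectSum.lof 𝔽 P (fun q => M.V q) p)).comp
    ((LinearMap.proj p).comp M.sections.subtype)

/-- The rank of the canonical map `lim M → colim M` computed through `p`. -/
def genRankAt (M : PersMod 𝔽 P) (p : P) : ℕ :=
  finrank 𝔽 (LinearMap.range (M.canonicalMapAt p))

/-- The generalized rank of a persistence module over a (connected) poset. -/
def genRank (M : PersMod 𝔽 P) [Nonempty P] : ℕ :=
  M.genRankAt (Classical.arbitrary P)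

/-- Restriction of a persistence module to a subposet. -/
def restrict (M : PersMod 𝔽 P) (I : Set P) : PersMod 𝔽 I where
  V := fun i => M.V i.val
  φ := fun {i j} h => M.φ h
  φ_refl := fun i => M.φ_refl i.val
  φ_comp := fun hpq hqr => M.φ_comp hpq hqr

/-- The generalized rank invariant: the generalized rank of the restriction
of `M` to `I`. -/
def rkInv (M : PersMod 𝔽 P) (I : Set P) : ℕ :=
  if h : I.Nonempty then (M.restrict I).genRankAt ⟨h.choose, h.choose_spec⟩ else 0

/-- Finite direct sums of persistence modules. -/
def dSum {F : Type} [Fintype F] (Ms : F → PersMod 𝔽 P) : PersMod 𝔽 P where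
  V := fun p => ∀ i, (Ms i).V p
  φ := fun {p q} h => LinearMap.pi fun i => ((Ms i).φ h).comp (LinearMap.proj i)
  φ_refl := by
    intro p
    refine LinearMap.ext fun x => funext fun i => ?_
    simp [(Ms i).φ_refl p]
  φ_comp := by
    intro p q r hpq hqr
    refine LinearMap.ext fun x => funext fun i => ?_
    simpa using LinearMap.congr_fun ((Ms i).φ_comp hpq hqr) (x i)

/-- Binary direct sum of persistence modules. -/
def prodMod (M N : PersMod 𝔽 P) : PersMod 𝔽 P where
  V := fun p => M.V p × N.V p
  φ := fun h => (M.φ h).prodMap (N.φ h)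
  φ_refl := by
    intro p
    refine LinearMap.ext fun x => ?_
    simp [M.φ_refl p, N.φ_refl p]
  φ_comp := by
    intro p q r h1 h2
    refine LinearMap.ext fun x => ?_
    have hM := LinearMap.congr_fun (M.φ_comp h1 h2) x.1
    have hN := LinearMap.congr_fun (N.φ_comp h1 h2) x.2
    simp only [LinearMap.comp_apply] at hM hN ⊢
    simp [hM, hN]

/-- The zero persistence module. -/
def IsZero (M : PersMod 𝔽 P) : Prop := ∀ p, Subsingleton (M.V p)

/-- Isomorphism of persistence modules. -/
def Isom (M N : PersMod 𝔽 P) : Prop :=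
  ∃ e : ∀ p, M.V p ≃ₗ[𝔽] N.V p,
    ∀ (p q : P) (h : p ≤ q) (v : M.V p), e q (M.φ h v) = N.φ h (e p v)

/-- Indecomposability of a persistence module. -/
def Indecomposable (M : PersMod 𝔽 P) : Prop :=
  ¬ M.IsZero ∧
    ∀ M₁ M₂ : PersMod 𝔽 P, M.Isom (M₁.prodMod M₂) → M₁.IsZero ∨ M₂.IsZero

end PersMod

section IntervalModule

variable {P : Type} [PartialOrder P]

/-- The fiber of the interval module at `p`: all of `𝔽` if `p ∈ I`, and `0`
otherwise. -/
def fiber (𝔽 : Type) [Field 𝔽] (I : Set P) (p : P) : Submodule 𝔽 𝔽 where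
  carrier := {x | p ∈ I ∨ x = 0}
  zero_mem' := Or.inr rfl
  add_mem' := by
    rintro x y (h | rfl) (h' | rfl)
    · exact Or.inl h
    · exact Or.inl h
    · exact Or.inl h'
    · exact Or.inr (add_zero 0)
  smul_mem' := by
    rintro c x (h | rfl)
    · exact Or.inl h
    · exact Or.inr (smul_zero c)

/-- The interval module `V_I` of a convex subset `I ⊆ P`. -/
def intervalModule (𝔽 : Type) [Field 𝔽] (I : Set P) (hc : SetConvex I) :
    PersMod 𝔽 P where
  V := fun p => fiber 𝔽 I p
  φ := fun {p q} _h =>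
    LinearMap.restrict (if q ∈ I then LinearMap.id else 0)
      (by
        intro x hx
        by_cases hq : q ∈ I
        · rw [if_pos hq]; exact Or.inl hq
        · rw [if_neg hq]; exact Or.inr rfl)
  φ_refl := by
    intro p
    refine LinearMap.ext fun x => Subtype.ext ?_
    rw [LinearMap.restrict_apply]
    by_cases hp : p ∈ I
    · simp [hp]
    · rcases x.2 with h | h
      · exact absurd h hp
      · simp [hp, h]
  φ_comp := by
    intro p q r hpq hqr
    refine LinearMap.ext fun x => Subtype.ext ?_
    simp only [LinearMap.comp_apply, LinearMap.restrict_apply]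
    by_cases hr : r ∈ I <;> by_cases hq : q ∈ I <;> simp [hr, hq]
    rcases x.2 with hp | h0
    · exact absurd (hc hp hr hpq hqr) hq
    · exact h0.symm

end IntervalModule

section Grid

variable {𝔽 : Type} [Field 𝔽]

lemma le_sub_e1 (p : ℤ × ℤ) : ((p.1 - 1, p.2) : ℤ × ℤ) ≤ p :=
  Prod.le_def.mpr ⟨show p.1 - 1 ≤ p.1 by omega, le_rfl⟩

lemma le_sub_e2 (p : ℤ × ℤ) : ((p.1, p.2 - 1) : ℤ × ℤ) ≤ p :=
  Prod.le_def.mpr ⟨le_rfl, show p.2 - 1 ≤ p.2 by omega⟩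

lemma le_sub_e12_e1 (p : ℤ × ℤ) : ((p.1 - 1, p.2 - 1) : ℤ × ℤ) ≤ (p.1 - 1, p.2) :=
  Prod.le_def.mpr ⟨le_rfl, show p.2 - 1 ≤ p.2 by omega⟩

lemma le_sub_e12_e2 (p : ℤ × ℤ) : ((p.1 - 1, p.2 - 1) : ℤ × ℤ) ≤ (p.1, p.2 - 1) :=
  Prod.le_def.mpr ⟨show p.1 - 1 ≤ p.1 by omega, le_rfl⟩

/-- The `0`-th bigraded Betti number of `M : ℤ² → vec` at `p`, defined via the
Koszul complex as the dimension of the cokernel of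
`M(p-e₁) ⊕ M(p-e₂) → M(p)`. -/
def beta0 (M : PersMod 𝔽 (ℤ × ℤ)) (p : ℤ × ℤ) : ℕ :=
  finrank 𝔽
    (M.V p ⧸ LinearMap.range ((M.φ (le_sub_e1 p)).coprod (M.φ (le_sub_e2 p))))

/-- The `2`-nd bigraded Betti number of `M : ℤ² → vec` at `p`, defined via the
Koszul complex as the dimension of the intersection of the kernels of the two
structure maps out of `M(p-e₁-e₂)`. -/
def beta2 (M : PersMod 𝔽 (ℤ × ℤ)) (p : ℤ × ℤ) : ℕ :=
  finrank 𝔽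
    ↥(LinearMap.ker (M.φ (le_sub_e12_e1 p)) ⊓ LinearMap.ker (M.φ (le_sub_e12_e2 p)))

/-- The `1`-st bigraded Betti number of `M : ℤ² → vec` at `p`, via the Koszul
complex characterization. -/
def beta1 (M : PersMod 𝔽 (ℤ × ℤ)) (p : ℤ × ℤ) : ℤ :=
  (beta0 M p : ℤ) + (beta2 M p : ℤ)
    - (finrank 𝔽 (M.V p) : ℤ) + (finrank 𝔽 (M.V (p.1 - 1, p.2)) : ℤ)
    + (finrank 𝔽 (M.V (p.1, p.2 - 1)) : ℤ) - (finrank 𝔽 (M.V (p.1 - 1, p.2 - 1)) : ℤ)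

/-- The maximal element of the grid `[m] × [n]` below a point `p ≥ (0,0)` of `ℤ²`. -/
def clamp (m n : ℕ) (p : ℤ × ℤ) : Fin (m + 1) × Fin (n + 1) :=
  (⟨min p.1.toNat m, Nat.lt_succ_of_le (min_le_right _ _)⟩,
   ⟨min p.2.toNat n, Nat.lt_succ_of_le (min_le_right _ _)⟩)

lemma clamp_mono {m n : ℕ} {p q : ℤ × ℤ} (h : p ≤ q) : clamp m n p ≤ clamp m n q := by
  obtain ⟨h1, h2⟩ := Prod.le_def.mp h
  refine Prod.le_def.mpr ⟨?_, ?_⟩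
  · exact Fin.mk_le_mk.mpr (min_le_min (Int.toNat_le_toNat h1) le_rfl)
  · exact Fin.mk_le_mk.mpr (min_le_min (Int.toNat_le_toNat h2) le_rfl)

/-- `M : ℤ² → vec` is encoded by `M' : [m] × [n] → vec`. -/
def IsEncodedBy {m n : ℕ} (M : PersMod 𝔽 (ℤ × ℤ))
    (M' : PersMod 𝔽 (Fin (m + 1) × Fin (n + 1))) : Prop :=
  (∀ p : ℤ × ℤ, ¬(0 ≤ p.1 ∧ 0 ≤ p.2) → Subsingleton (M.V p)) ∧
  ∃ e : ∀ p : ℤ × ℤ, 0 ≤ p.1 → 0 ≤ p.2 → (M.V p ≃ₗ[𝔽] M'.V (clamp m n p)),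
    ∀ (p q : ℤ × ℤ) (hp1 : 0 ≤ p.1) (hp2 : 0 ≤ p.2) (hq1 : 0 ≤ q.1) (hq2 : 0 ≤ q.2)
      (hpq : p ≤ q) (v : M.V p),
      e q hq1 hq2 (M.φ hpq v) = M'.φ (clamp_mono hpq) (e p hp1 hp2 v)

/-- A point `a ∈ ℤ²` "belongs" to `J ⊆ [m] × [n]` if it is a grid point lying in `J`. -/
def gridPt {m n : ℕ} (a : ℤ × ℤ) (J : Set (Fin (m + 1) × Fin (n + 1))) : Prop :=
  ∃ x ∈ J, (((x.1 : ℕ) : ℤ), ((x.2 : ℕ) : ℤ)) = a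

end Grid

/-!
The generalized rank is invariant under isomorphism and additive over finite direct sums,
because sections and colimits both commute with finite direct sums. It therefore suffices to
show that an indecomposable `N` has rank `1` if `N ≅ V_P` and `0` otherwise.

For `V_P`, the rank is at most `dim V_P(p) = 1`, and the constant section has nonzero image
in the colimit, as the functional induced by the identity maps `V_P(p) = 𝔽` shows. Conversely,
let `x` be a section of `N` with nonzero image in `colim N`, and let `g` be a functional on
`colim N` equal to `1` on that image. Then `g_q := g ∘ ι_q` is a cocone. Because `P` is
connected, the image of `x` does not depend on `q`, so `g_q (x_q) = 1` for every `q`. Hence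
`v ↦ (g_q v, v - g_q v • x_q)` splits `N` as `V_P ⊕ ker g`, and indecomposability forces
`ker g = 0`.
-/

section LinearAlgebra

variable {K : Type} [Field K]

theorem LinearMap.finrank_range_eq_of_comp_eq {S C S' C' : Type}
    [AddCommGroup S] [Module K S] [AddCommGroup C] [Module K C]
    [AddCommGroup S'] [Module K S'] [AddCommGroup C'] [Module K C']
    {c : S →ₗ[K] C} {c' : S' →ₗ[K] C'} (eS : S ≃ₗ[K] S') (eC : C ≃ₗ[K] C')
    (h : eC.toLinearMap ∘ₗ c = c' ∘ₗ eS.toLinearMap) :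
    finrank K (LinearMap.range c) = finrank K (LinearMap.range c') := by
  rw [← LinearEquiv.finrank_map_eq eC, ← LinearMap.range_comp, h,
    LinearMap.range_comp_of_range_eq_top _ eS.range]

def Submodule.piUnivEquiv {ι : Type} {φ : ι → Type} [∀ i, AddCommGroup (φ i)]
    [∀ i, Module K (φ i)] (p : ∀ i, Submodule K (φ i)) :
    Submodule.pi Set.univ p ≃ₗ[K] ∀ i, p i where
  toFun x i := ⟨x.1 i, x.2 i (Set.mem_univ i)⟩
  invFun y := ⟨fun i => y i, fun i _ => (y i).2⟩
  map_add' _ _ := rfl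
  map_smul' _ _ := rfl
  left_inv _ := rfl
  right_inv _ := rfl

theorem LinearMap.range_piMap {ι : Type} {φ ψ : ι → Type} [∀ i, AddCommGroup (φ i)]
    [∀ i, Module K (φ i)] [∀ i, AddCommGroup (ψ i)] [∀ i, Module K (ψ i)]
    (f : ∀ i, φ i →ₗ[K] ψ i) :
    LinearMap.range (LinearMap.piMap f) = Submodule.pi Set.univ fun i => LinearMap.range (f i) :=
  SetLike.coe_injective <| by
    rw [LinearMap.coe_range, LinearMap.coe_piMap, Set.range_piMap, Submodule.coe_pi]
    simp only [LinearMap.coe_range]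

theorem LinearMap.finrank_range_piMap {ι : Type} [Fintype ι] {φ ψ : ι → Type}
    [∀ i, AddCommGroup (φ i)] [∀ i, Module K (φ i)] [∀ i, AddCommGroup (ψ i)]
    [∀ i, Module K (ψ i)] (f : ∀ i, φ i →ₗ[K] ψ i)
    [∀ i, FiniteDimensional K (LinearMap.range (f i))] :
    finrank K (LinearMap.range (LinearMap.piMap f)) = ∑ i, finrank K (LinearMap.range (f i)) := by
  rw [LinearMap.range_piMap, (Submodule.piUnivEquiv _).finrank_eq, Module.finrank_pi_fintype]


namespace PersMod

variable {𝔽 : Type} [Field 𝔽] {P : Type} [PartialOrder P]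

def colimι (M : PersMod 𝔽 P) (p : P) : M.V p →ₗ[𝔽] M.colim :=
  M.colimRel.mkQ ∘ₗ DirectSum.lof 𝔽 P (fun q => M.V q) p

theorem canonicalMapAt_apply (M : PersMod 𝔽 P) (p : P) (x : M.sections) :
    M.canonicalMapAt p x = M.colimι p (x.1 p) := rfl

theorem colimι_φ (M : PersMod 𝔽 P) {p q : P} (h : p ≤ q) (v : M.V p) :
    M.colimι q (M.φ h v) = M.colimι p v :=
  (Submodule.Quotient.eq _).mpr (Submodule.subset_span ⟨p, q, h, v, rfl⟩)

theorem colim_hom_ext {M : PersMod 𝔽 P} {W : Type} [AddCommGroup W] [Module 𝔽 W]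
    {g g' : M.colim →ₗ[𝔽] W} (h : ∀ p v, g (M.colimι p v) = g' (M.colimι p v)) : g = g' :=
  Submodule.linearMap_qext _ (DirectSum.linearMap_ext 𝔽 fun p => LinearMap.ext (h p))

def IsCocone (M : PersMod 𝔽 P) {W : Type} [AddCommGroup W] [Module 𝔽 W]
    (f : ∀ p, M.V p →ₗ[𝔽] W) : Prop :=
  ∀ ⦃p q : P⦄ (h : p ≤ q) (v : M.V p), f q (M.φ h v) = f p v

theorem isCocone_colimι (M : PersMod 𝔽 P) : M.IsCocone M.colimι :=
  fun _ _ h v => M.colimι_φ h v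

theorem IsCocone.comp {M : PersMod 𝔽 P} {W W' : Type} [AddCommGroup W] [Module 𝔽 W]
    [AddCommGroup W'] [Module 𝔽 W'] {f : ∀ p, M.V p →ₗ[𝔽] W} (hf : M.IsCocone f)
    (u : W →ₗ[𝔽] W') : M.IsCocone fun p => u ∘ₗ f p :=
  fun _ _ h v => congrArg u (hf h v)

def colimDesc (M : PersMod 𝔽 P) {W : Type} [AddCommGroup W] [Module 𝔽 W]
    (f : ∀ p, M.V p →ₗ[𝔽] W) (hf : M.IsCocone f) : M.colim →ₗ[𝔽] W :=
  M.colimRel.liftQ (DirectSum.toModule 𝔽 P W f) <| (Submodule.span_le).mpr <| by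
    rintro _ ⟨p, q, h, v, rfl⟩
    simp [DirectSum.toModule_lof, hf h v]

@[simp]
theorem colimDesc_colimι (M : PersMod 𝔽 P) {W : Type} [AddCommGroup W] [Module 𝔽 W]
    (f : ∀ p, M.V p →ₗ[𝔽] W) (hf : M.IsCocone f) (p : P) (v : M.V p) :
    M.colimDesc f hf (M.colimι p v) = f p v :=
  DirectSum.toModule_lof 𝔽 p v

theorem canonicalMapAt_eq (hconn : ZigzagConnected P) (M : PersMod 𝔽 P) (p q : P) :
    M.canonicalMapAt p = M.canonicalMapAt q := by
  ext x
  induction hconn p q with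
  | refl => rfl
  | tail _ hbc ih =>
    rw [ih]
    rcases hbc with h | h <;>
      rw [canonicalMapAt_apply, canonicalMapAt_apply, ← x.2 _ _ h, colimι_φ]

instance (M : PersMod 𝔽 P) (p : P) :
    FiniteDimensional 𝔽 (LinearMap.range (M.canonicalMapAt p)) :=
  Submodule.finiteDimensional_of_le (LinearMap.range_comp_le_range _ (M.colimι p))

theorem genRankAt_le_finrank (M : PersMod 𝔽 P) (p : P) :
    M.genRankAt p ≤ finrank 𝔽 (M.V p) :=
  (Submodule.finrank_mono (LinearMap.range_comp_le_range _ (M.colimι p))).trans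
    (LinearMap.finrank_range_le _)

theorem genRankAt_ne_zero_iff (M : PersMod 𝔽 P) (p : P) :
    M.genRankAt p ≠ 0 ↔ ∃ x, M.canonicalMapAt p x ≠ 0 := by
  rw [genRankAt, Ne, Submodule.finrank_eq_zero, LinearMap.range_eq_bot, LinearMap.ext_iff]
  simp only [LinearMap.zero_apply, not_forall]

section Isom

variable {M N : PersMod 𝔽 P}

theorem Isom.trans {L : PersMod 𝔽 P} : M.Isom N → N.Isom L → M.Isom L
  | ⟨e, he⟩, ⟨e', he'⟩ => ⟨fun p => (e p).trans (e' p), fun p q h v => by simp [he, he']⟩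

theorem naturality_symm {e : ∀ p, M.V p ≃ₗ[𝔽] N.V p}
    (he : ∀ (p q : P) (h : p ≤ q) (v : M.V p), e q (M.φ h v) = N.φ h (e p v))
    (p q : P) (h : p ≤ q) (v : N.V p) : (e q).symm (N.φ h v) = M.φ h ((e p).symm v) :=
  (e q).symm_apply_eq.mpr (by rw [he, LinearEquiv.apply_symm_apply])

theorem isCocone_colimι_comp {f : ∀ p, M.V p →ₗ[𝔽] N.V p}
    (hf : ∀ (p q : P) (h : p ≤ q) (v : M.V p), f q (M.φ h v) = N.φ h (f p v)) :
    M.IsCocone fun p => N.colimι p ∘ₗ f p := fun p q h v => by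
  simp only [LinearMap.comp_apply, hf p q h v, colimι_φ]

def sectionsCongr (e : ∀ p, M.V p ≃ₗ[𝔽] N.V p)
    (he : ∀ (p q : P) (h : p ≤ q) (v : M.V p), e q (M.φ h v) = N.φ h (e p v)) :
    M.sections ≃ₗ[𝔽] N.sections where
  toFun x := ⟨fun p => e p (x.1 p), fun p q h => by rw [← he, x.2 p q h]⟩
  invFun y := ⟨fun p => (e p).symm (y.1 p), fun p q h => by rw [← naturality_symm he, y.2 p q h]⟩
  map_add' x y := Subtype.ext <| funext fun p => map_add (e p) _ _
  map_smul' c x := Subtype.ext <| funext fun p => map_smul (e p) _ _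
  left_inv x := Subtype.ext <| funext fun p => (e p).symm_apply_apply _
  right_inv y := Subtype.ext <| funext fun p => (e p).apply_symm_apply _

def colimCongr (e : ∀ p, M.V p ≃ₗ[𝔽] N.V p)
    (he : ∀ (p q : P) (h : p ≤ q) (v : M.V p), e q (M.φ h v) = N.φ h (e p v)) :
    M.colim ≃ₗ[𝔽] N.colim :=
  LinearEquiv.ofLinearMap (M.colimDesc _ (isCocone_colimι_comp he))
    (N.colimDesc _ (isCocone_colimι_comp (naturality_symm he)))
    (colim_hom_ext fun p v => by simp) (colim_hom_ext fun p v => by simp)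

theorem genRankAt_eq_of_isom (h : M.Isom N) (p : P) : M.genRankAt p = N.genRankAt p := by
  obtain ⟨e, he⟩ := h
  exact LinearMap.finrank_range_eq_of_comp_eq (c := M.canonicalMapAt p) (c' := N.canonicalMapAt p)
    (sectionsCongr e he) (colimCongr e he)
    (LinearMap.ext fun x => by simp [canonicalMapAt_apply, colimCongr, sectionsCongr])

end Isom

section DirectSum

variable {F : Type} [Fintype F] (Ms : F → PersMod 𝔽 P)

theorem dSum_φ_single {p q : P} (h : p ≤ q) (i : F) (v : (Ms i).V p) :
    (dSum Ms).φ h (Pi.single i v) = Pi.single i ((Ms i).φ h v) :=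
  funext <| Pi.apply_single (fun j => (Ms j).φ h) (fun _ => map_zero _) i v

theorem isCocone_piMap_colimι :
    (dSum Ms).IsCocone fun p => LinearMap.piMap fun i => (Ms i).colimι p :=
  fun _ _ h v => funext fun i => (Ms i).colimι_φ h (v i)

theorem isCocone_colimι_single (i : F) :
    (Ms i).IsCocone fun p => (dSum Ms).colimι p ∘ₗ LinearMap.single 𝔽 (fun i => (Ms i).V p) i :=
  fun _ _ h v => (congrArg _ (dSum_φ_single Ms h i v)).symm.trans ((dSum Ms).colimι_φ h _)

def dSumSectionsEquiv : (dSum Ms).sections ≃ₗ[𝔽] ∀ i, (Ms i).sections where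
  toFun x i := ⟨fun p => x.1 p i, fun p q h => congrFun (x.2 p q h) i⟩
  invFun y := ⟨fun p i => (y i).1 p, fun p q h => funext fun i => (y i).2 p q h⟩
  map_add' _ _ := rfl
  map_smul' _ _ := rfl
  left_inv _ := rfl
  right_inv _ := rfl

def dSumColimEquiv : (dSum Ms).colim ≃ₗ[𝔽] ∀ i, (Ms i).colim :=
  LinearEquiv.ofLinearMap ((dSum Ms).colimDesc _ (isCocone_piMap_colimι Ms))
    (LinearMap.lsum 𝔽 (fun i => (Ms i).colim) 𝔽 fun i =>
      (Ms i).colimDesc _ (isCocone_colimι_single Ms i))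
    (LinearMap.pi_ext' fun i => colim_hom_ext fun p v => by
      simp only [LinearMap.comp_apply, LinearMap.coe_single, LinearMap.lsum_piSingle,
        colimDesc_colimι]
      exact ((dSum Ms).colimDesc_colimι _ _ p _).trans
        (funext <| Pi.apply_single (fun j => (Ms j).colimι p) (fun j => map_zero _) i v))
    (colim_hom_ext fun p v => by
      have hdesc : (dSum Ms).colimDesc _ (isCocone_piMap_colimι Ms) ((dSum Ms).colimι p v) =
          fun i => (Ms i).colimι p (v i) := colimDesc_colimι ..
      rw [LinearMap.comp_apply, hdesc, LinearMap.lsum_apply, LinearMap.sum_apply]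
      simp only [LinearMap.comp_apply, LinearMap.proj_apply, colimDesc_colimι]
      exact (map_sum ((dSum Ms).colimι p) _ _).symm.trans (congrArg _ (Finset.univ_sum_single v)))

theorem genRankAt_dSum (p : P) : (dSum Ms).genRankAt p = ∑ i, (Ms i).genRankAt p := by
  rw [genRankAt, LinearMap.finrank_range_eq_of_comp_eq (c := (dSum Ms).canonicalMapAt p)
    (c' := LinearMap.piMap fun i => (Ms i).canonicalMapAt p) (dSumSectionsEquiv Ms)
    (dSumColimEquiv Ms) (LinearMap.ext fun x => (dSum Ms).colimDesc_colimι _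
      (isCocone_piMap_colimι Ms) p (x.1 p)), LinearMap.finrank_range_piMap]
  rfl

end DirectSum

end PersMod

def LinearMap.prodKerEquivOfApplyEqOne {E : Type} [AddCommGroup E] [Module K E]
    (g : E →ₗ[K] K) {x : E} (hx : g x = 1) :
    E ≃ₗ[K] K × LinearMap.ker g where
  toFun v := (g v, ⟨v - g v • x, by simp [hx]⟩)
  invFun w := w.1 • x + w.2
  map_add' u v := by ext <;> simp [add_smul]; abel
  map_smul' c v := by ext <;> simp [smul_sub, smul_smul]
  left_inv v := by simp
  right_inv w := by ext <;> simp [hx]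

end LinearAlgebra

abbrev fullIntervalModule (𝔽 : Type) [Field 𝔽] (P : Type) [PartialOrder P] : PersMod 𝔽 P :=
  intervalModule 𝔽 Set.univ setConvex_univ

theorem fiber_univ {𝔽 : Type} [Field 𝔽] {P : Type} (p : P) : fiber 𝔽 Set.univ p = ⊤ :=
  Submodule.eq_top_iff'.mpr fun _ => Or.inl trivial

section FullInterval

variable {𝔽 : Type} [Field 𝔽] {P : Type} [PartialOrder P]

theorem intervalModule_φ_val {I : Set P} (hc : SetConvex I) {p q : P} (h : p ≤ q)
    (hq : q ∈ I) (v : (intervalModule 𝔽 I hc).V p) :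
    ((intervalModule 𝔽 I hc).φ h v).1 = v.1 := by
  show ((if q ∈ I then (LinearMap.id : 𝔽 →ₗ[𝔽] 𝔽) else 0) v.1 : 𝔽) = v.1
  rw [if_pos hq, LinearMap.id_apply]

theorem finrank_fullIntervalModule (p : P) : finrank 𝔽 ((fullIntervalModule 𝔽 P).V p) = 1 := by
  show finrank 𝔽 (fiber 𝔽 Set.univ p) = 1
  rw [fiber_univ, finrank_top, Module.finrank_self]

theorem isCocone_fullIntervalModule_val :
    (fullIntervalModule 𝔽 P).IsCocone fun p => (fiber 𝔽 Set.univ p).subtype :=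
  fun _ _ h v => intervalModule_φ_val setConvex_univ h trivial v

theorem genRankAt_fullIntervalModule (p : P) : (fullIntervalModule 𝔽 P).genRankAt p = 1 := by
  refine le_antisymm ((PersMod.genRankAt_le_finrank _ p).trans (finrank_fullIntervalModule p).le)
    (Nat.one_le_iff_ne_zero.mpr ((PersMod.genRankAt_ne_zero_iff _ p).mpr ?_))
  let one : (fullIntervalModule 𝔽 P).sections :=
    ⟨fun _ => ⟨1, Or.inl trivial⟩, fun _ _ h => Subtype.ext (isCocone_fullIntervalModule_val h _)⟩
  refine ⟨one, fun h0 => one_ne_zero (α := 𝔽) ?_⟩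
  have h1 := (fullIntervalModule 𝔽 P).colimDesc_colimι _ isCocone_fullIntervalModule_val p (one.1 p)
  rw [← PersMod.canonicalMapAt_apply, h0, map_zero] at h1
  exact h1.symm

end FullInterval

namespace PersMod

variable {𝔽 : Type} [Field 𝔽] {P : Type} [PartialOrder P] {N : PersMod 𝔽 P}

def kerOfCocone {g : ∀ p, N.V p →ₗ[𝔽] 𝔽} (hg : N.IsCocone g) : PersMod 𝔽 P where
  V p := LinearMap.ker (g p)
  φ h := (N.φ h).restrict fun v hv => by rw [LinearMap.mem_ker, hg h v]; exact hv
  φ_refl p := LinearMap.ext fun v => Subtype.ext (LinearMap.congr_fun (N.φ_refl p) v.1)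
  φ_comp hpq hqr :=
    LinearMap.ext fun v => Subtype.ext (LinearMap.congr_fun (N.φ_comp hpq hqr) v.1)

theorem isom_prodMod_kerOfCocone {g : ∀ p, N.V p →ₗ[𝔽] 𝔽} (hg : N.IsCocone g) (x : N.sections)
    (hx : ∀ p, g p (x.1 p) = 1) :
    N.Isom ((fullIntervalModule 𝔽 P).prodMod (kerOfCocone hg)) := by
  refine ⟨fun p => ((g p).prodKerEquivOfApplyEqOne (hx p)).trans
      ((LinearEquiv.ofTop _ (fiber_univ p)).symm.prodCongr (LinearEquiv.refl _ _)),
    fun p q h v => ?_⟩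
  refine Prod.ext (Subtype.ext ?_) (Subtype.ext ?_)
  · exact (hg h v).trans
      (intervalModule_φ_val (𝔽 := 𝔽) setConvex_univ h trivial ⟨g p v, Or.inl trivial⟩).symm
  · show N.φ h v - g q (N.φ h v) • x.1 q = N.φ h (v - g p v • x.1 p)
    rw [map_sub, map_smul, x.2 p q h, hg h v]

theorem prodMod_isom_of_isZero {M K : PersMod 𝔽 P} (hK : K.IsZero) : (M.prodMod K).Isom M :=
  ⟨fun p => { LinearMap.fst 𝔽 (M.V p) (K.V p) with
      invFun := fun v => (v, 0)
      left_inv := fun _ => Prod.ext rfl ((hK p).elim _ _)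
      right_inv := fun _ => rfl },
    fun _ _ _ _ => rfl⟩

theorem isom_fullIntervalModule_of_genRankAt_ne_zero (hconn : ZigzagConnected P)
    (hN : N.Indecomposable) {p : P} (h : N.genRankAt p ≠ 0) :
    N.Isom (fullIntervalModule 𝔽 P) := by
  obtain ⟨x, hx⟩ := (genRankAt_ne_zero_iff N p).mp h
  obtain ⟨g₀, hg₀⟩ := Module.Projective.exists_dual_eq_one 𝔽 hx
  have hgx : ∀ q, (g₀ ∘ₗ N.colimι q) (x.1 q) = 1 := fun q => by
    rw [LinearMap.comp_apply, ← canonicalMapAt_apply, canonicalMapAt_eq hconn N q p, hg₀]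
  have hsplit := isom_prodMod_kerOfCocone (N.isCocone_colimι.comp g₀) x hgx
  rcases hN.2 _ _ hsplit with hW | hK
  · have := hW p
    exact absurd (finrank_fullIntervalModule (𝔽 := 𝔽) p)
      (by rw [finrank_zero_of_subsingleton]; exact zero_ne_one)
  · exact hsplit.trans (prodMod_isom_of_isZero hK)

theorem genRankAt_of_indecomposable (hconn : ZigzagConnected P) (hN : N.Indecomposable) (p : P) :
    N.genRankAt p = if N.Isom (fullIntervalModule 𝔽 P) then 1 else 0 := by
  split_ifs with h
  · rw [genRankAt_eq_of_isom h, genRankAt_fullIntervalModule]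
  · by_contra h0
    exact h (isom_fullIntervalModule_of_genRankAt_ne_zero hconn hN h0)

end PersMod

theorem genRank_eq_mult_of_full_interval_general (𝔽 : Type) [Field 𝔽] (P : Type)
    [PartialOrder P] [Nonempty P] (hconn : ZigzagConnected P)
    (M : PersMod 𝔽 P) (F : Type) [Fintype F] (Ms : F → PersMod 𝔽 P)
    (hind : ∀ i, (Ms i).Indecomposable) (hiso : M.Isom (PersMod.dSum Ms)) :
    M.genRank =
      Nat.card {i : F // (Ms i).Isom (intervalModule 𝔽 (Set.univ : Set P) setConvex_univ)} := by
  rw [PersMod.genRank, PersMod.genRankAt_eq_of_isom hiso, PersMod.genRankAt_dSum,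
    Nat.card_eq_fintype_card, Fintype.card_subtype, Finset.card_filter]
  exact Finset.sum_congr rfl fun i _ => PersMod.genRankAt_of_indecomposable hconn (hind i) _

/-- If `M ≅ ⊕_{i ∈ F} M_i` with each `M_i` nonzero
indecomposable, then the generalized rank of `M` is the number of indices `i`
with `M_i ≅ V_P`, the interval module supported on all of `P`. -/
theorem genRank_eq_mult_of_full_interval (𝔽 : Type) [Field 𝔽] (P : Type)
    [PartialOrder P] [Fintype P] [Nonempty P] (hconn : ZigzagConnected P)
    (M : PersMod 𝔽 P) (F : Type) [Fintype F] (Ms : F → PersMod 𝔽 P)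
    (hind : ∀ i, (Ms i).Indecomposable) (hiso : M.Isom (PersMod.dSum Ms)) :
    M.genRank =
      Nat.card {i : F // (Ms i).Isom (intervalModule 𝔽 (Set.univ : Set P) setConvex_univ)} :=
  genRank_eq_mult_of_full_interval_general 𝔽 P hconn M F Ms hind hiso
end
end

section
/- Let m, n ∈ ℕ, let M' : [m]×[n] → vec be a persistence module, and let M : ℤ² → vec be encoded by M'. Then for every p = (p₁,p₂) ∈ ℤ² with 0 ≤ p₁ ≤ m+1 and 0 ≤ p₂ ≤ n+1, the zeroth bigraded Betti number satisfies β₀(M)(p) = Σ_{J ∈ Con([m]×[n]) : p ∈ J, p−e₁ ∉ J, p−e₂ ∉ J} dgm(M')(J). -/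
open scoped Classical
open Module

noncomputable section

/-!
Split the sum by inclusion–exclusion over whether `J` contains `p - e₁` and `p - e₂`. Each of
the four resulting sums `∑_{J ⊇ I} dgm J`, for `I = {p}`, `{p - e₁, p}`, `{p - e₂, p}` and
`{p - e₁, p - e₂, p}`, is `rk(M')(I)` by Möbius inversion. Since `p` is the top of `I` and every
other point of `I` is covered by it, the limit over `I` embeds in `M'(p)` as the intersection of
the images of the structure maps, so the ranks are `dim M(p)`, `rk φ₁`, `rk φ₂` and
`dim (im φ₁ ∩ im φ₂)`, and the same alternating sum computes
`β₀(M)(p) = dim M(p) - dim (im φ₁ + im φ₂)`. A point `p - eᵢ` outside the grid contributes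
nothing to either side, and for `p₁ = m + 1` or `p₂ = n + 1` one of the maps `φᵢ` is an
isomorphism, so both sides vanish.
-/

theorem finrank_quotient_sup_eq {K V : Type*} [DivisionRing K] [AddCommGroup V] [Module K V]
    [FiniteDimensional K V] (U W : Submodule K V) :
    (finrank K (V ⧸ U ⊔ W) : ℤ) =
      finrank K V - finrank K U - finrank K W + finrank K ↥(U ⊓ W) := by
  have hquot := (U ⊔ W).finrank_quotient_add_finrank
  have hsup := Submodule.finrank_sup_add_finrank_inf_eq U W
  omega

theorem finsum_cond_and_not_and_not {α G : Type*} [Finite α] [AddCommGroup G] (f : α → G)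
    (A B C : α → Prop) :
    ∑ᶠ (a) (_ : A a ∧ ¬B a ∧ ¬C a), f a =
      ∑ᶠ (a) (_ : A a), f a - ∑ᶠ (a) (_ : A a ∧ B a), f a - ∑ᶠ (a) (_ : A a ∧ C a), f a
        + ∑ᶠ (a) (_ : A a ∧ B a ∧ C a), f a := by
  have := Fintype.ofFinite α
  simp only [finsum_eq_sum_of_fintype, finsum_eq_if, ← Finset.sum_sub_distrib,
    ← Finset.sum_add_distrib]
  refine Finset.sum_congr rfl fun a _ => ?_
  by_cases A a <;> by_cases B a <;> by_cases C a <;> simp [*]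

theorem isPathConnIn_of_forall_covBy {P : Type} [PartialOrder P] {I : Set P} {t : P}
    (ht : t ∈ I) (hI : ∀ q ∈ I, q = t ∨ q ⋖ t) : IsPathConnIn I := by
  refine ⟨⟨t, ht⟩, fun q hq r hr => ?_⟩
  have hqt : Relation.ReflTransGen (fun a b => a ∈ I ∧ b ∈ I ∧ (a ⋖ b ∨ b ⋖ a)) q t := by
    rcases hI q hq with rfl | hq'
    · exact .refl
    · exact .single ⟨hq, ht, .inl hq'⟩
  refine hqt.trans ?_
  rcases hI r hr with rfl | hr'
  · exact .refl
  · exact .single ⟨ht, hr, .inr hr'⟩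

namespace PersMod

variable {𝔽 : Type} [Field 𝔽] {P : Type} [PartialOrder P] (N : PersMod 𝔽 P)

theorem canonicalMapAt_eq_of_le {p q : P} (h : p ≤ q) :
    N.canonicalMapAt p = N.canonicalMapAt q := by
  ext x
  have hx : N.φ h (x.1 p) = x.1 q := x.2 p q h
  show N.colimRel.mkQ (DirectSum.lof 𝔽 P (fun r => N.V r) p (x.1 p))
      = N.colimRel.mkQ (DirectSum.lof 𝔽 P (fun r => N.V r) q (x.1 q))
  rw [← hx, eq_comm, Submodule.mkQ_apply, Submodule.mkQ_apply, Submodule.Quotient.eq]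
  exact Submodule.subset_span ⟨p, q, h, x.1 p, rfl⟩

/- The structure maps into a top element `t` descend to a retraction of the colimit onto
`N.V t`. -/
theorem injective_colimRel_mkQ_comp_lof_of_isTop {t : P} (ht : IsTop t) :
    Function.Injective (N.colimRel.mkQ ∘ₗ DirectSum.lof 𝔽 P (fun q => N.V q) t) := by
  let g := DirectSum.toModule 𝔽 P (N.V t) fun q => N.φ (ht q)
  have hg : N.colimRel ≤ LinearMap.ker g := by
    rw [colimRel, Submodule.span_le]
    rintro _ ⟨p, q, hpq, v, rfl⟩
    have hcomp := LinearMap.congr_fun (N.φ_comp hpq (ht q)) v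
    simp only [LinearMap.comp_apply] at hcomp
    simp [g, hcomp]
  refine Function.LeftInverse.injective (g := N.colimRel.liftQ g hg) fun w => ?_
  simp [g, N.φ_refl t]

/-- The limit cone leg `π_t : lim N|_I → N(t)`. -/
def sectionsEval {I : Set P} {t : P} (ht : t ∈ I) : (N.restrict I).sections →ₗ[𝔽] N.V t :=
  LinearMap.proj (⟨t, ht⟩ : I) ∘ₗ (N.restrict I).sections.subtype

theorem rkInv_eq_finrank_range_sectionsEval {I : Set P} {t : P} (ht : t ∈ I)
    (htop : ∀ q ∈ I, q ≤ t) :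
    N.rkInv I = finrank 𝔽 (LinearMap.range (N.sectionsEval ht)) := by
  have hne : I.Nonempty := ⟨t, ht⟩
  have hle : (⟨hne.choose, hne.choose_spec⟩ : I) ≤ ⟨t, ht⟩ := htop _ hne.choose_spec
  rw [rkInv, dif_pos hne, genRankAt, canonicalMapAt_eq_of_le _ hle, canonicalMapAt,
    LinearMap.range_comp]
  have hinj := (N.restrict I).injective_colimRel_mkQ_comp_lof_of_isTop (t := ⟨t, ht⟩)
    fun q => htop q.1 q.2
  exact (Submodule.equivMapOfInjective _ hinj _).finrank_eq.symm

/- A section over `I` is determined by arbitrary preimages of its value at `t`: the only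
nontrivial relations in `I` are those into `t`, because `q ⋖ t` makes `q` minimal in `I`. -/
theorem mem_range_sectionsEval_iff {I : Set P} {t : P} (ht : t ∈ I)
    (hI : ∀ q ∈ I, q = t ∨ q ⋖ t) (w : N.V t) :
    w ∈ LinearMap.range (N.sectionsEval ht) ↔
      ∀ q ∈ I, ∀ hqt : q ≤ t, w ∈ LinearMap.range (N.φ hqt) := by
  constructor
  · rintro ⟨x, rfl⟩ q hq hqt
    exact ⟨x.1 ⟨q, hq⟩, x.2 ⟨q, hq⟩ ⟨t, ht⟩ hqt⟩
  · intro hw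
    have htop : ∀ q ∈ I, q ≤ t := fun q hq => (hI q hq).elim le_of_eq CovBy.le
    choose u hu using fun q hq => hw q hq (htop q hq)
    have hut : u t ht = w := by simpa [N.φ_refl t] using hu t ht
    refine ⟨⟨fun q => u q.1 q.2, ?_⟩, hut⟩
    rintro ⟨q, hq⟩ ⟨r, hr⟩ (hqr : q ≤ r)
    have hrt : r = t ∨ q = r := by
      rcases hI r hr with h | hr'
      · exact .inl h
      rcases hI q hq with rfl | hq'
      · exact absurd (hqr.trans_lt hr'.lt) (lt_irrefl _)
      exact .inr (hqr.eq_of_not_lt fun h => hq'.2 h hr'.lt)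
    rcases hrt with rfl | rfl
    · exact (hu q hq).trans hut.symm
    · exact LinearMap.congr_fun (N.φ_refl q) _

theorem range_φ_eq_top_of_eq {x y : P} (h : x ≤ y) (hxy : x = y) :
    LinearMap.range (N.φ h) = ⊤ := by
  subst hxy
  rw [N.φ_refl, LinearMap.range_id]

theorem rkInv_singleton (a : P) : N.rkInv {a} = finrank 𝔽 (N.V a) := by
  have ha := Set.mem_singleton a
  have hrange : LinearMap.range (N.sectionsEval ha) = ⊤ := by
    ext w
    rw [N.mem_range_sectionsEval_iff ha fun q hq => .inl hq]
    simp [N.φ_refl]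
  rw [N.rkInv_eq_finrank_range_sectionsEval ha fun q hq => le_of_eq hq, hrange, finrank_top]

theorem rkInv_pair {b a : P} (h : b ⋖ a) :
    N.rkInv {b, a} = finrank 𝔽 (LinearMap.range (N.φ h.le)) := by
  have ha : a ∈ ({b, a} : Set P) := .inr rfl
  have hI : ∀ q ∈ ({b, a} : Set P), q = a ∨ q ⋖ a := by
    rintro q (rfl | rfl); exacts [.inr h, .inl rfl]
  have hrange : LinearMap.range (N.sectionsEval ha) = LinearMap.range (N.φ h.le) := by
    ext w
    rw [N.mem_range_sectionsEval_iff ha hI]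
    simp [N.φ_refl, h.le]
  rw [N.rkInv_eq_finrank_range_sectionsEval ha fun q hq => (hI q hq).elim le_of_eq CovBy.le,
    hrange]

theorem rkInv_triple {b c t : P} (hb : b ⋖ t) (hc : c ⋖ t) :
    N.rkInv {b, c, t} =
      finrank 𝔽 ↥(LinearMap.range (N.φ hb.le) ⊓ LinearMap.range (N.φ hc.le)) := by
  have ht : t ∈ ({b, c, t} : Set P) := .inr (.inr rfl)
  have hI : ∀ q ∈ ({b, c, t} : Set P), q = t ∨ q ⋖ t := by
    rintro q (rfl | rfl | rfl); exacts [.inr hb, .inr hc, .inl rfl]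
  have hrange : LinearMap.range (N.sectionsEval ht) =
      LinearMap.range (N.φ hb.le) ⊓ LinearMap.range (N.φ hc.le) := by
    ext w
    rw [N.mem_range_sectionsEval_iff ht hI]
    simp [N.φ_refl, hb.le, hc.le]
  rw [N.rkInv_eq_finrank_range_sectionsEval ht fun q hq => (hI q hq).elim le_of_eq CovBy.le,
    hrange]

end PersMod

section Grid

variable {m n : ℕ}

theorem gridPt.mem_Icc {a : ℤ × ℤ} {J : Set (Fin (m + 1) × Fin (n + 1))} (h : gridPt a J) :
    a ∈ Set.Icc 0 ((m : ℤ), (n : ℤ)) := by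
  obtain ⟨x, -, rfl⟩ := h
  have := x.1.isLt
  have := x.2.isLt
  simp only [Set.mem_Icc, Prod.le_def, Prod.fst_zero, Prod.snd_zero]
  omega

theorem gridPt_iff_clamp_mem {a : ℤ × ℤ} (ha : a ∈ Set.Icc 0 ((m : ℤ), (n : ℤ)))
    (J : Set (Fin (m + 1) × Fin (n + 1))) : gridPt a J ↔ clamp m n a ∈ J := by
  simp only [Set.mem_Icc, Prod.le_def, Prod.fst_zero, Prod.snd_zero] at ha
  constructor
  · rintro ⟨x, hx, rfl⟩
    convert hx using 1
    ext <;> simp [clamp, Nat.le_of_lt_succ x.1.isLt, Nat.le_of_lt_succ x.2.isLt]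
  · refine fun h => ⟨_, h, ?_⟩
    ext <;> simp [clamp] <;> omega

theorem clamp_covBy {a b : ℤ × ℤ} (ha : a ∈ Set.Icc 0 ((m : ℤ), (n : ℤ)))
    (hb : b ∈ Set.Icc 0 ((m : ℤ), (n : ℤ))) (h : a ⋖ b) : clamp m n a ⋖ clamp m n b := by
  obtain ⟨a₁, a₂⟩ := a
  obtain ⟨b₁, b₂⟩ := b
  simp only [Set.mem_Icc, Prod.le_def, Prod.fst_zero, Prod.snd_zero] at ha hb
  simp only [Prod.mk_covBy_mk_iff, Order.covBy_iff_add_one_eq] at h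
  simp only [clamp, Prod.mk_covBy_mk_iff, Fin.covBy_iff, Nat.covBy_iff_add_one_eq, Fin.ext_iff]
  omega

end Grid

namespace IsEncodedBy

variable {𝔽 : Type} [Field 𝔽] {m n : ℕ} {M : PersMod 𝔽 (ℤ × ℤ)}
  {M' : PersMod 𝔽 (Fin (m + 1) × Fin (n + 1))}

theorem exists_linearEquiv_map_range (henc : IsEncodedBy M M') {p : ℤ × ℤ} (hp : 0 ≤ p) :
    ∃ e : M.V p ≃ₗ[𝔽] M'.V (clamp m n p), ∀ q, 0 ≤ q → ∀ hqp : q ≤ p,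
      (LinearMap.range (M.φ hqp)).map (e : M.V p →ₗ[𝔽] M'.V (clamp m n p)) =
        LinearMap.range (M'.φ (clamp_mono hqp)) := by
  obtain ⟨-, e, he⟩ := henc
  refine ⟨e p hp.1 hp.2, fun q hq hqp => ?_⟩
  have hcomm : (e p hp.1 hp.2 : M.V p →ₗ[𝔽] M'.V (clamp m n p)) ∘ₗ M.φ hqp =
      M'.φ (clamp_mono hqp) ∘ₗ (e q hq.1 hq.2 : M.V q →ₗ[𝔽] M'.V (clamp m n q)) :=
    LinearMap.ext (he q p hq.1 hq.2 hp.1 hp.2 hqp)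
  rw [← LinearMap.range_comp, hcomm, LinearMap.range_comp_of_range_eq_top _ (LinearEquiv.range _)]

theorem finrank_eq (henc : IsEncodedBy M M') {p : ℤ × ℤ} (hp : 0 ≤ p) :
    finrank 𝔽 (M.V p) = finrank 𝔽 (M'.V (clamp m n p)) :=
  (henc.exists_linearEquiv_map_range hp).choose.finrank_eq

theorem finrank_range_φ (henc : IsEncodedBy M M') {q p : ℤ × ℤ} (hq : 0 ≤ q) (hqp : q ≤ p) :
    finrank 𝔽 (LinearMap.range (M.φ hqp)) =
      finrank 𝔽 (LinearMap.range (M'.φ (clamp_mono hqp))) := by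
  obtain ⟨e, he⟩ := henc.exists_linearEquiv_map_range (hq.trans hqp)
  rw [← he q hq hqp, LinearEquiv.finrank_map_eq]

theorem finrank_range_φ_inf_range_φ (henc : IsEncodedBy M M') {q r p : ℤ × ℤ} (hq : 0 ≤ q)
    (hr : 0 ≤ r) (hqp : q ≤ p) (hrp : r ≤ p) :
    finrank 𝔽 ↥(LinearMap.range (M.φ hqp) ⊓ LinearMap.range (M.φ hrp)) =
      finrank 𝔽 ↥(LinearMap.range (M'.φ (clamp_mono hqp)) ⊓
        LinearMap.range (M'.φ (clamp_mono hrp))) := by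
  obtain ⟨e, he⟩ := henc.exists_linearEquiv_map_range (hq.trans hqp)
  rw [← he q hq hqp, ← he r hr hrp, ← Submodule.map_inf _ e.injective,
    LinearEquiv.finrank_map_eq]

theorem range_φ_eq_bot (henc : IsEncodedBy M M') {q p : ℤ × ℤ} (hq : ¬0 ≤ q) (hqp : q ≤ p) :
    LinearMap.range (M.φ hqp) = ⊥ := by
  have := henc.1 q hq
  exact LinearMap.range_eq_bot.mpr (Subsingleton.elim _ _)

theorem range_φ_eq_top (henc : IsEncodedBy M M') {q p : ℤ × ℤ} (hq : 0 ≤ q) (hqp : q ≤ p)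
    (hclamp : clamp m n q = clamp m n p) : LinearMap.range (M.φ hqp) = ⊤ := by
  obtain ⟨e, he⟩ := henc.exists_linearEquiv_map_range (hq.trans hqp)
  rw [← Submodule.map_eq_top_iff (e := e), he q hq hqp, M'.range_φ_eq_top_of_eq _ hclamp]

end IsEncodedBy

theorem beta0_eq_finrank_sub {𝔽 : Type} [Field 𝔽] (M : PersMod 𝔽 (ℤ × ℤ)) (p : ℤ × ℤ) :
    (beta0 M p : ℤ) = finrank 𝔽 (M.V p) - finrank 𝔽 (LinearMap.range (M.φ (le_sub_e1 p)))
      - finrank 𝔽 (LinearMap.range (M.φ (le_sub_e2 p)))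
      + finrank 𝔽 ↥(LinearMap.range (M.φ (le_sub_e1 p)) ⊓ LinearMap.range (M.φ (le_sub_e2 p))) := by
  rw [beta0, LinearMap.range_coprod]
  exact finrank_quotient_sup_eq _ _

def PersMod.IsGenPersDiagram {𝔽 : Type} [Field 𝔽] {P : Type} [PartialOrder P]
    (N : PersMod 𝔽 P) (dgm : Set P → ℤ) : Prop :=
  ∀ I : Set P, IsPathConnIn I →
    (N.rkInv I : ℤ) = ∑ᶠ (J : Set P) (_ : IsPathConnIn J ∧ I ⊆ J), dgm J

theorem PersMod.IsGenPersDiagram.finsum_eq_rkInv {𝔽 : Type} [Field 𝔽] {P : Type}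
    [PartialOrder P] {N : PersMod 𝔽 P} {dgm : Set P → ℤ} (hdgm : N.IsGenPersDiagram dgm)
    {I : Set P} (hI : IsPathConnIn I) {C : Set P → Prop}
    (hC : ∀ J, C J ↔ IsPathConnIn J ∧ I ⊆ J) :
    ∑ᶠ (J : Set P) (_ : C J), dgm J = N.rkInv I := by
  simp only [hC, hdgm I hI]

section DiagramSums

variable {𝔽 : Type} [Field 𝔽] {m n : ℕ} {M : PersMod 𝔽 (ℤ × ℤ)}
  {M' : PersMod 𝔽 (Fin (m + 1) × Fin (n + 1))} {dgm : Set (Fin (m + 1) × Fin (n + 1)) → ℤ}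
  {p : ℤ × ℤ}

theorem finsum_dgm_gridPt (henc : IsEncodedBy M M') (hdgm : M'.IsGenPersDiagram dgm)
    (hp : p ∈ Set.Icc 0 ((m : ℤ), (n : ℤ))) :
    ∑ᶠ (J) (_ : IsPathConnIn J ∧ gridPt p J), dgm J = finrank 𝔽 (M.V p) := by
  have hI : IsPathConnIn {clamp m n p} :=
    isPathConnIn_of_forall_covBy (Set.mem_singleton _) fun q hq => .inl hq
  rw [hdgm.finsum_eq_rkInv hI fun J => by rw [gridPt_iff_clamp_mem hp, Set.singleton_subset_iff],
    M'.rkInv_singleton, henc.finrank_eq hp.1]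

theorem finsum_dgm_gridPt_gridPt (henc : IsEncodedBy M M') (hdgm : M'.IsGenPersDiagram dgm)
    (hp : p ∈ Set.Icc 0 ((m : ℤ), (n : ℤ))) {q : ℤ × ℤ} (hqp : q ⋖ p) :
    ∑ᶠ (J) (_ : IsPathConnIn J ∧ gridPt p J ∧ gridPt q J), dgm J =
      finrank 𝔽 (LinearMap.range (M.φ hqp.le)) := by
  by_cases hq : 0 ≤ q
  · have hqI : q ∈ Set.Icc 0 ((m : ℤ), (n : ℤ)) := ⟨hq, hqp.le.trans hp.2⟩
    have hcov := clamp_covBy hqI hp hqp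
    have hI : IsPathConnIn {clamp m n q, clamp m n p} :=
      isPathConnIn_of_forall_covBy (.inr rfl)
        (by rintro _ (rfl | rfl); exacts [.inr hcov, .inl rfl])
    rw [hdgm.finsum_eq_rkInv hI fun J => by
        rw [gridPt_iff_clamp_mem hp, gridPt_iff_clamp_mem hqI, Set.insert_subset_iff,
          Set.singleton_subset_iff]
        tauto,
      M'.rkInv_pair hcov, henc.finrank_range_φ hq]
  · have hnot : ∀ J : Set (Fin (m + 1) × Fin (n + 1)), ¬gridPt q J := fun J h => hq h.mem_Icc.1
    rw [henc.range_φ_eq_bot hq hqp.le, finrank_bot]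
    simp [hnot]

theorem finsum_dgm_gridPt_gridPt_gridPt (henc : IsEncodedBy M M')
    (hdgm : M'.IsGenPersDiagram dgm) (hp : p ∈ Set.Icc 0 ((m : ℤ), (n : ℤ))) {q r : ℤ × ℤ}
    (hqp : q ⋖ p) (hrp : r ⋖ p) :
    ∑ᶠ (J) (_ : IsPathConnIn J ∧ gridPt p J ∧ gridPt q J ∧ gridPt r J), dgm J =
      finrank 𝔽 ↥(LinearMap.range (M.φ hqp.le) ⊓ LinearMap.range (M.φ hrp.le)) := by
  by_cases hqr : 0 ≤ q ∧ 0 ≤ r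
  · have hqI : q ∈ Set.Icc 0 ((m : ℤ), (n : ℤ)) := ⟨hqr.1, hqp.le.trans hp.2⟩
    have hrI : r ∈ Set.Icc 0 ((m : ℤ), (n : ℤ)) := ⟨hqr.2, hrp.le.trans hp.2⟩
    have hcovq := clamp_covBy hqI hp hqp
    have hcovr := clamp_covBy hrI hp hrp
    have hI : IsPathConnIn {clamp m n q, clamp m n r, clamp m n p} :=
      isPathConnIn_of_forall_covBy (.inr (.inr rfl))
        (by rintro _ (rfl | rfl | rfl); exacts [.inr hcovq, .inr hcovr, .inl rfl])
    rw [hdgm.finsum_eq_rkInv hI fun J => by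
        rw [gridPt_iff_clamp_mem hp, gridPt_iff_clamp_mem hqI, gridPt_iff_clamp_mem hrI,
          Set.insert_subset_iff, Set.insert_subset_iff, Set.singleton_subset_iff]
        tauto,
      M'.rkInv_triple hcovq hcovr, henc.finrank_range_φ_inf_range_φ hqr.1 hqr.2]
  · have hnot : ∀ J : Set (Fin (m + 1) × Fin (n + 1)), ¬(gridPt q J ∧ gridPt r J) := fun J h =>
      hqr ⟨h.1.mem_Icc.1, h.2.mem_Icc.1⟩
    have hbot : LinearMap.range (M.φ hqp.le) ⊓ LinearMap.range (M.φ hrp.le) = ⊥ := by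
      rcases not_and_or.mp hqr with hq | hr
      · rw [henc.range_φ_eq_bot hq, bot_inf_eq]
      · rw [henc.range_φ_eq_bot hr, inf_bot_eq]
    rw [hbot, finrank_bot]
    simp [hnot]

end DiagramSums

/-- If `M : ℤ² → vec` is encoded by `M' : [m] × [n] → vec`, then
for `p` in `[0, m+1] × [0, n+1]`, the zeroth bigraded Betti number of `M` at `p`
is the sum of the generalized persistence diagram of `M'` over the
path-connected subposets `J ∈ Con([m] × [n])` with `p ∈ J`, `p - e₁ ∉ J`,
`p - e₂ ∉ J`. -/
theorem beta0_eq_sum_dgm (𝔽 : Type) [Field 𝔽] (m n : ℕ)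
    (M' : PersMod 𝔽 (Fin (m + 1) × Fin (n + 1))) (M : PersMod 𝔽 (ℤ × ℤ))
    (henc : IsEncodedBy M M')
    (dgm : Set (Fin (m + 1) × Fin (n + 1)) → ℤ)
    (hdgm : ∀ I : Set (Fin (m + 1) × Fin (n + 1)), IsPathConnIn I →
      (M'.rkInv I : ℤ) =
        ∑ᶠ (J : Set (Fin (m + 1) × Fin (n + 1))) (_ : IsPathConnIn J ∧ I ⊆ J), dgm J)
    (p : ℤ × ℤ) (hp1 : 0 ≤ p.1) (hp2 : p.1 ≤ (m : ℤ) + 1)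
    (hp3 : 0 ≤ p.2) (hp4 : p.2 ≤ (n : ℤ) + 1) :
    (beta0 M p : ℤ) =
      ∑ᶠ (J : Set (Fin (m + 1) × Fin (n + 1)))
        (_ : IsPathConnIn J ∧ gridPt p J ∧
              ¬ gridPt (p.1 - 1, p.2) J ∧ ¬ gridPt (p.1, p.2 - 1) J),
        dgm J := by
  have he₁ : (p.1 - 1, p.2) ⋖ p :=
    Prod.mk_covBy_mk_iff_left.mpr (Order.covBy_iff_add_one_eq.mpr (sub_add_cancel _ _))
  have he₂ : (p.1, p.2 - 1) ⋖ p :=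
    Prod.mk_covBy_mk_iff_right.mpr (Order.covBy_iff_add_one_eq.mpr (sub_add_cancel _ _))
  rw [beta0_eq_finrank_sub]
  by_cases hbox : p.1 ≤ m ∧ p.2 ≤ n
  · have hp : p ∈ Set.Icc 0 ((m : ℤ), (n : ℤ)) := ⟨⟨hp1, hp3⟩, hbox⟩
    have hIE := finsum_cond_and_not_and_not dgm (fun J => IsPathConnIn J ∧ gridPt p J)
      (gridPt (p.1 - 1, p.2)) (gridPt (p.1, p.2 - 1))
    simp only [and_assoc] at hIE
    rw [hIE, finsum_dgm_gridPt henc hdgm hp, finsum_dgm_gridPt_gridPt henc hdgm hp he₁,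
      finsum_dgm_gridPt_gridPt henc hdgm hp he₂,
      finsum_dgm_gridPt_gridPt_gridPt henc hdgm hp he₁ he₂]
  have hnot : ∀ J : Set (Fin (m + 1) × Fin (n + 1)), ¬gridPt p J := fun J h => hbox h.mem_Icc.2
  simp only [hnot, false_and, and_false, finsum_false, finsum_zero]
  rcases not_and_or.mp hbox with h | h
  · rw [henc.range_φ_eq_top (q := (p.1 - 1, p.2)) ⟨show (0 : ℤ) ≤ p.1 - 1 by omega, hp3⟩ he₁.le
      (by ext <;> simp [clamp]; omega), top_inf_eq, finrank_top]
    ring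
  · rw [henc.range_φ_eq_top (q := (p.1, p.2 - 1)) ⟨hp1, show (0 : ℤ) ≤ p.2 - 1 by omega⟩ he₂.le
      (by ext <;> simp [clamp]; omega), inf_top_eq, finrank_top]
    ring
end
end

section
/- Let P be a finite connected poset, M : P → vec a persistence module, and let I ⊆ J be path-connected subposets of P (I, J ∈ Con(P)). Then rk(M)(J) ≤ rk(M)(I): the generalized rank invariant is monotonically decreasing with respect to inclusion of path-connected subposets. -/
open scoped Classical
open Module

noncomputable section

section Aux

variable {𝔽 : Type} [Field 𝔽] {P : Type} [PartialOrder P]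

lemma canonicalMapAt_eq_of_le (M : PersMod 𝔽 P) {p q : P} (h : p ≤ q) :
    M.canonicalMapAt p = M.canonicalMapAt q := by
  ext x
  simp only [PersMod.canonicalMapAt, LinearMap.comp_apply, Submodule.mkQ_apply,
    LinearMap.proj_apply, Submodule.subtype_apply]
  rw [Submodule.Quotient.eq]
  have hx : M.φ h ((x : ∀ r, M.V r) p) = (x : ∀ r, M.V r) q := x.2 p q h
  have hmem : DirectSum.lof 𝔽 P (fun r => M.V r) q (M.φ h ((x : ∀ r, M.V r) p))
        - DirectSum.lof 𝔽 P (fun r => M.V r) p ((x : ∀ r, M.V r) p) ∈ M.colimRel :=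
    Submodule.subset_span ⟨p, q, h, _, rfl⟩
  rw [hx] at hmem
  simpa using neg_mem hmem

lemma canonicalMapAt_eq_of_zigzag (M : PersMod 𝔽 P) {p q : P}
    (h : Relation.ReflTransGen (fun a b : P => a ≤ b ∨ b ≤ a) p q) :
    M.canonicalMapAt p = M.canonicalMapAt q := by
  induction h with
  | refl => rfl
  | tail _ hbc ih =>
      rcases hbc with h | h
      · exact ih.trans (canonicalMapAt_eq_of_le M h)
      · exact ih.trans (canonicalMapAt_eq_of_le M h).symm

lemma zigzag_subtype {J : Set P} {p q : P}
    (h : Relation.ReflTransGen (fun a b : P => a ∈ J ∧ b ∈ J ∧ (a ⋖ b ∨ b ⋖ a)) p q) :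
    ∀ (hp : p ∈ J) (hq : q ∈ J),
      Relation.ReflTransGen (fun a b : ↥J => a ≤ b ∨ b ≤ a) ⟨p, hp⟩ ⟨q, hq⟩ := by
  induction h with
  | refl => intro hp hq; exact Relation.ReflTransGen.refl
  | tail _ hbc ih =>
      intro hp hq
      obtain ⟨hb, hc, hcov⟩ := hbc
      refine (ih hp hb).tail ?_
      rcases hcov with h | h
      · exact Or.inl (Subtype.mk_le_mk.mpr h.le)
      · exact Or.inr (Subtype.mk_le_mk.mpr h.le)

/-- Restriction of sections along an inclusion of subposets. -/
def resSections (M : PersMod 𝔽 P) {I J : Set P} (hIJ : I ⊆ J) :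
    (M.restrict J).sections →ₗ[𝔽] (M.restrict I).sections where
  toFun x := ⟨fun i => x.1 ⟨i.val, hIJ i.2⟩,
    fun i i' h => x.2 ⟨i.val, hIJ i.2⟩ ⟨i'.val, hIJ i'.2⟩ h⟩
  map_add' x y := rfl
  map_smul' c x := rfl

/-- The map on colimits induced by an inclusion of subposets. -/
def extColim (M : PersMod 𝔽 P) {I J : Set P} (hIJ : I ⊆ J) :
    (M.restrict I).colim →ₗ[𝔽] (M.restrict J).colim :=
  Submodule.mapQ _ _
    (DirectSum.toModule 𝔽 ↥I _ fun i =>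
      @DirectSum.lof 𝔽 _ ↥J (fun p => (M.restrict J).V p) _ _
        (fun a b => Classical.propDecidable (a = b)) ⟨i.val, hIJ i.2⟩)
    (by
      rw [← Submodule.map_le_iff_le_comap, PersMod.colimRel, Submodule.map_span,
        Submodule.span_le]
      rintro _ ⟨z, ⟨p, q, h, v, rfl⟩, rfl⟩
      rw [map_sub]
      erw [DirectSum.toModule_lof, DirectSum.toModule_lof]
      exact Submodule.subset_span
        ⟨⟨p.val, hIJ p.2⟩, ⟨q.val, hIJ q.2⟩, h, v, rfl⟩)

lemma canonical_factor (M : PersMod 𝔽 P) {I J : Set P} (hIJ : I ⊆ J) (i : ↥I) :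
    (M.restrict J).canonicalMapAt ⟨i.val, hIJ i.2⟩ =
      (extColim M hIJ).comp
        (((M.restrict I).canonicalMapAt i).comp (resSections M hIJ)) := by
  ext x
  simp only [PersMod.canonicalMapAt, LinearMap.comp_apply, Submodule.mkQ_apply,
    LinearMap.proj_apply, Submodule.subtype_apply, extColim, Submodule.mapQ_apply]
  erw [DirectSum.toModule_lof]
  rfl

end Aux

/-- Monotonicity of the generalized rank invariant: for
path-connected subposets `I ⊆ J` of a finite connected poset,
`rk(M)(J) ≤ rk(M)(I)`. -/
theorem rkInv_antitone (𝔽 : Type) [Field 𝔽] (P : Type) [PartialOrder P]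
    [Fintype P] (hconn : ZigzagConnected P) (M : PersMod 𝔽 P)
    (I J : Set P) (hI : IsPathConnIn I) (hJ : IsPathConnIn J) (hIJ : I ⊆ J) :
    M.rkInv J ≤ M.rkInv I := by
  rw [PersMod.rkInv, dif_pos hJ.1, PersMod.rkInv, dif_pos hI.1]
  set qJ : ↥J := ⟨hJ.1.choose, hJ.1.choose_spec⟩
  set pI : ↥I := ⟨hI.1.choose, hI.1.choose_spec⟩
  set p0 : ↥J := ⟨pI.val, hIJ pI.2⟩
  have hzig : Relation.ReflTransGen (fun a b : ↥J => a ≤ b ∨ b ≤ a) qJ p0 :=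
    zigzag_subtype (hJ.2 qJ.val qJ.2 p0.val p0.2) qJ.2 p0.2
  have hc : (M.restrict J).canonicalMapAt qJ = (M.restrict J).canonicalMapAt p0 :=
    canonicalMapAt_eq_of_zigzag _ hzig
  show (M.restrict J).genRankAt qJ ≤ (M.restrict I).genRankAt pI
  rw [PersMod.genRankAt, PersMod.genRankAt, hc, canonical_factor M hIJ pI]
  set c := (M.restrict I).canonicalMapAt pI
  set g := c.comp (resSections M hIJ)
  calc finrank 𝔽 (LinearMap.range ((extColim M hIJ).comp g))
      = finrank 𝔽 ((LinearMap.range g).map (extColim M hIJ)) := by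
        rw [LinearMap.range_comp]
    _ ≤ finrank 𝔽 (LinearMap.range g) := Submodule.finrank_map_le _ _
    _ ≤ finrank 𝔽 (LinearMap.range c) := by
        refine Submodule.finrank_mono ?_
        rw [LinearMap.range_comp]
        exact LinearMap.map_le_range
end
end

section
/- Let m, n ∈ ℕ, let P = [m]×[n], let M : P → vec be a persistence module, and let I ∈ Int(P). Let cov(I) denote the set of intervals J ∈ Int(P) that cover I in Int(P) (i.e., J ⊋ I and no interval K satisfies J ⊋ K ⊋ I). Assume that for every nonempty S ⊆ cov(I) there exists ⋁S ∈ Int(P) that contains every member of S and is contained in every interval of P containing every member of S. Then dgm_𝕀(M)(I) = rk(M)(I) + Σ_{∅ ≠ S ⊆ cov(I)} (−1)^{|S|} · rk(M)(⋁S). -/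
open scoped Classical
open Module

noncomputable section

/-- The set of intervals covering `I` in `Int(P)`: intervals `J ⊋ I` such that
no interval `K` satisfies `J ⊋ K ⊋ I`. -/
def covSet {P : Type} [PartialOrder P] (I : Set P) : Set (Set P) :=
  {J | IsIntervalSet J ∧ I ⊂ J ∧ ¬ ∃ K : Set P, IsIntervalSet K ∧ I ⊂ K ∧ K ⊂ J}

/-!
Substitute `rk(M)(K) = ∑_{J ⊇ K} dgm(J)` into the right-hand side. Since `⋁S ⊆ J` exactly when
every member of `S` lies in `J`, the coefficient of `dgm(J)`, for an interval `J ⊇ I`, is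
`1 + ∑ (-1)^|S|` over the nonempty sets `S` of covers of `I` contained in `J`. That alternating
sum is `-1` unless no cover of `I` lies in `J`, and in the finite poset `Int(P)` this happens
only for `J = I`. Hence only `dgm(I)` survives.
-/

open Finset

-- The decidability instance is a parameter so that rewriting matches the instance with which
-- each `Finset.filter` was elaborated.
lemma finsum_cond_eq_sum_filter {α M : Type*} [Fintype α] [AddCommMonoid M] (q : α → Prop)
    [DecidablePred q] (f : α → M) : ∑ᶠ (x) (_ : q x), f x = ∑ x with q x, f x :=
  finsum_cond_eq_sum_of_cond_iff f fun {_} _ => by simp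

section AlternatingSum

variable {γ : Type*} [Fintype γ]

lemma sum_subset_neg_one_pow_card (C : Set γ) :
    ∑ S : Set γ with S ⊆ C, (-1 : ℤ) ^ Nat.card S = if C.Nonempty then 0 else 1 := by
  have hfin : ∑ S : Set γ with S ⊆ C, (-1 : ℤ) ^ Nat.card S
      = ∑ T ∈ C.toFinset.powerset, (-1 : ℤ) ^ T.card :=
    sum_equiv Fintype.finsetEquivSet.symm (fun S => by simp) (fun S _ => by simp)
  rw [hfin, sum_powerset_neg_one_pow_card]
  simp [Set.nonempty_iff_ne_empty]

lemma sum_nonempty_subset_neg_one_pow_card (C : Set γ) :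
    ∑ S : Set γ with S.Nonempty ∧ S ⊆ C, (-1 : ℤ) ^ Nat.card S
      = -if C.Nonempty then 1 else 0 := by
  have hall := sum_subset_neg_one_pow_card C
  have hempty : ((univ : Finset (Set γ)).filter (· ⊆ C)).filter (¬·.Nonempty) = {∅} := by
    ext S
    simp only [mem_filter, mem_univ, true_and, Set.not_nonempty_iff_eq_empty, mem_singleton]
    exact ⟨And.right, fun h => ⟨h ▸ Set.empty_subset C, h⟩⟩
  rw [← sum_filter_add_sum_filter_not _ Set.Nonempty, hempty, filter_filter,
    filter_congr fun S _ => (and_comm : S ⊆ C ∧ S.Nonempty ↔ _)] at hall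
  simp only [sum_singleton, Nat.card_of_isEmpty, pow_zero] at hall
  split_ifs at hall ⊢ <;> linarith

lemma sum_nonempty_subset_neg_one_pow_card_mul_ite_forall (C : Set γ) (q : γ → Prop) (d : ℤ) :
    ∑ S : Set γ with S.Nonempty ∧ S ⊆ C,
        (-1 : ℤ) ^ Nat.card S * (if ∀ x ∈ S, q x then d else 0)
      = -if ∃ x ∈ C, q x then d else 0 := by
  calc _ = ∑ S : Set γ with S.Nonempty ∧ S ⊆ {x ∈ C | q x}, (-1 : ℤ) ^ Nat.card S * d := by
        rw [sum_filter, sum_filter]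
        refine sum_congr rfl fun S _ => ?_
        rw [mul_ite, mul_zero, ← ite_and]
        exact if_congr (by simp only [Set.subset_def, Set.mem_sep_iff]; grind) rfl rfl
    _ = _ := by
        rw [← sum_mul, sum_nonempty_subset_neg_one_pow_card]
        split_ifs <;> simp_all [Set.Nonempty]

end AlternatingSum

section Covers

variable {β : Type*} [PartialOrder β]

/-- Upper covers of `a` in the subposet `{b | p b}`; `covSet I` is `coversIn IsIntervalSet I`. -/
def coversIn (p : β → Prop) (a : β) : Set β :=
  {b | p b ∧ a < b ∧ ¬∃ c, p c ∧ a < c ∧ c < b}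

lemma exists_mem_coversIn_le_iff [Finite β] {p : β → Prop} {a b : β} (hb : p b) (hab : a ≤ b) :
    (∃ c ∈ coversIn p a, c ≤ b) ↔ a ≠ b := by
  constructor
  · rintro ⟨c, ⟨-, hac, -⟩, hcb⟩ rfl
    exact not_lt_of_ge hcb hac
  · intro hne
    obtain ⟨c, hcb, ⟨hc, hac⟩, hmin⟩ :=
      exists_minimal_le_of_wellFoundedLT (fun c => p c ∧ a < c) b ⟨hb, hab.lt_of_ne hne⟩
    refine ⟨c, ⟨hc, hac, fun ⟨d, hd, had, hdc⟩ => ?_⟩, hcb⟩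
    exact not_le_of_gt hdc (hmin ⟨hd, had⟩ (le_of_lt hdc))

theorem eq_add_sum_neg_one_pow_card_mul_join_coversIn [Fintype β] (p : β → Prop)
    (rk dgm : β → ℤ) (hrk : ∀ b, p b → rk b = ∑ᶠ (c) (_ : p c ∧ b ≤ c), dgm c)
    {a : β} (ha : p a) (join : Set β → β)
    (hjoin : ∀ S, S.Nonempty → S ⊆ coversIn p a →
      IsLeast (upperBounds S ∩ {x | p x}) (join S)) :
    dgm a = rk a + ∑ᶠ (S : Set β) (_ : S.Nonempty ∧ S ⊆ coversIn p a),
      (-1 : ℤ) ^ Nat.card S * rk (join S) := by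
  simp only [finsum_cond_eq_sum_filter] at hrk ⊢
  have hrk_join : ∀ S ∈ ({S : Set β | S.Nonempty ∧ S ⊆ coversIn p a} : Finset _),
      rk (join S) = ∑ c with p c ∧ a ≤ c, if ∀ J ∈ S, J ≤ c then dgm c else 0 := by
    intro S hS
    obtain ⟨⟨J, hJ⟩, hcov⟩ := (mem_filter.mp hS).2
    have hv := hjoin S ⟨J, hJ⟩ hcov
    rw [hrk _ hv.1.2, ← sum_filter, filter_filter]
    refine sum_congr (filter_congr fun c _ => ⟨fun ⟨hc, hvc⟩ => ?_, fun ⟨⟨hc, _⟩, hcS⟩ =>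
      ⟨hc, hv.2 ⟨hcS, hc⟩⟩⟩) fun _ _ => rfl
    have hcS : c ∈ upperBounds S := fun _ hJ' => (hv.1.1 hJ').trans hvc
    exact ⟨⟨hc, (hcov hJ).2.1.le.trans (hcS hJ)⟩, hcS⟩
  have hcoef : ∀ c ∈ ({c | p c ∧ a ≤ c} : Finset β),
      ∑ S : Set β with S.Nonempty ∧ S ⊆ coversIn p a,
        (-1 : ℤ) ^ Nat.card S * (if ∀ J ∈ S, J ≤ c then dgm c else 0)
        = -if a ≠ c then dgm c else 0 := by
    intro c hc
    obtain ⟨hpc, hac⟩ := (mem_filter.mp hc).2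
    refine (sum_nonempty_subset_neg_one_pow_card_mul_ite_forall _ (· ≤ c) (dgm c)).trans ?_
    simp only [exists_mem_coversIn_le_iff hpc hac]
  calc dgm a = rk a - ∑ c with p c ∧ a ≤ c, if a ≠ c then dgm c else 0 := by
        rw [hrk a ha, ← sum_filter, filter_ne,
          ← add_sum_erase _ dgm (mem_filter.mpr ⟨mem_univ a, ha, le_rfl⟩), add_sub_cancel_right]
    _ = rk a + ∑ c with p c ∧ a ≤ c, ∑ S : Set β with S.Nonempty ∧ S ⊆ coversIn p a,
          (-1 : ℤ) ^ Nat.card S * (if ∀ J ∈ S, J ≤ c then dgm c else 0) := by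
        rw [sum_congr rfl hcoef, sum_neg_distrib, sub_eq_add_neg]
    _ = _ := by
        rw [sum_comm]
        refine congrArg _ (sum_congr rfl fun S hS => ?_)
        rw [hrk_join S hS, mul_sum]

end Covers

/-- The inclusion–exclusion formula of Asashiba et al. for the
`Int`-generalized persistence diagram of a module over `[m] × [n]`:
`dgm_𝕀(M)(I) = rk(M)(I) + Σ_{∅ ≠ S ⊆ cov(I)} (-1)^{|S|} rk(M)(⋁S)`, provided
the joins `⋁S` exist in `Int([m] × [n])`. -/
theorem dgmInt_inclusion_exclusion (𝔽 : Type) [Field 𝔽] (m n : ℕ)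
    (M : PersMod 𝔽 (Fin (m + 1) × Fin (n + 1)))
    (I : Set (Fin (m + 1) × Fin (n + 1))) (hI : IsIntervalSet I)
    (vee : Set (Set (Fin (m + 1) × Fin (n + 1))) → Set (Fin (m + 1) × Fin (n + 1)))
    (hvee : ∀ S, S.Nonempty → S ⊆ covSet I →
      IsIntervalSet (vee S) ∧ (∀ J ∈ S, J ⊆ vee S) ∧
        ∀ K : Set (Fin (m + 1) × Fin (n + 1)), IsIntervalSet K →
          (∀ J ∈ S, J ⊆ K) → vee S ⊆ K)
    (dgmInt : Set (Fin (m + 1) × Fin (n + 1)) → ℤ)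
    (hdgm : ∀ I' : Set (Fin (m + 1) × Fin (n + 1)), IsIntervalSet I' →
      (M.rkInv I' : ℤ) =
        ∑ᶠ (J : Set (Fin (m + 1) × Fin (n + 1))) (_ : IsIntervalSet J ∧ I' ⊆ J),
          dgmInt J) :
    dgmInt I =
      (M.rkInv I : ℤ) +
        ∑ᶠ (S : Set (Set (Fin (m + 1) × Fin (n + 1))))
          (_ : S.Nonempty ∧ S ⊆ covSet I),
          (-1 : ℤ) ^ (Nat.card S) * (M.rkInv (vee S) : ℤ) := by
  refine eq_add_sum_neg_one_pow_card_mul_join_coversIn IsIntervalSet (fun J => (M.rkInv J : ℤ))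
    dgmInt hdgm hI vee fun S hne hcov => ?_
  obtain ⟨hjoin, hupper, hleast⟩ := hvee S hne hcov
  exact ⟨⟨hupper, hjoin⟩, fun K ⟨hKupper, hK⟩ => hleast K hK hKupper⟩
end
end
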